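/- Under U-Topk semantics in a simple probabilistic relation, Faithfulness holds: if t_i ≻ t_j and p(t_i) > p(t_j), and S is a set maximizing Q_k(S) = Σ_{W : top-k(W) = S} Pr(W) with t_j ∈ S, then t_i ∈ S. Key step: for S with t_j ∈ S, t_i ∉ S, the set S' = (S \ {t_j}) ∪ {t_i} satisfies Q_k(S') ≥ Q_k(S)·(p(t_i)(1−p(t_j)))/((1−p(t_i))p(t_j)) > Q_k(S). -/

import Mathlib

/-!
A world whose top-`k` answer is `S ∋ tj` cannot contain `ti ∉ S`, since `ti` outscores `tj`.
Swapping `tj` for `ti` in such a world gives a world whose answer is `S' = (S \ {tj}) ∪ {ti}`.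
The swap is injective and multiplies the world probability by
`p(ti)(1 - p(tj)) / ((1 - p(ti)) p(tj))`, which exceeds `1` when `p(tj) < p(ti)`. So
`Q_k(S') > Q_k(S)` as soon as `Q_k(S) > 0`, and a maximizer has positive value because the
world `R` itself has positive probability.
-/

open Finset

namespace UTopk

variable {α β : Type*}

section Ranking

variable [LinearOrder β] (s : α → β)

def scoreRank (W : Finset α) (t : α) : ℕ := #(W.filter fun t' => s t < s t')

def topK (k : ℕ) (W : Finset α) : Finset α := W.filter fun t => scoreRank s W t < k

variable {s}

lemma mem_topK {k : ℕ} {W : Finset α} {t : α} :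
    t ∈ topK s k W ↔ t ∈ W ∧ scoreRank s W t < k :=
  mem_filter

lemma scoreRank_le_of_le {W : Finset α} {a b : α} (h : s a ≤ s b) :
    scoreRank s W b ≤ scoreRank s W a :=
  card_le_card fun _ hx => by
    rw [mem_filter] at hx ⊢
    exact ⟨hx.1, h.trans_lt hx.2⟩

lemma mem_topK_of_le {k : ℕ} {W : Finset α} {a b : α} (ha : a ∈ topK s k W) (hb : b ∈ W)
    (h : s a ≤ s b) : b ∈ topK s k W :=
  mem_topK.mpr ⟨hb, (scoreRank_le_of_le h).trans_lt (mem_topK.mp ha).2⟩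

variable [DecidableEq α]

lemma scoreRank_lt_of_lt {W : Finset α} {a b : α} (hb : b ∈ W) (h : s a < s b) :
    scoreRank s W b < scoreRank s W a := by
  have hsub : insert b (W.filter fun t' => s b < s t') ⊆ W.filter fun t' => s a < s t' := by
    intro x hx
    rcases mem_insert.mp hx with rfl | hx
    · exact mem_filter.mpr ⟨hb, h⟩
    · rw [mem_filter] at hx ⊢
      exact ⟨hx.1, h.trans hx.2⟩
  have hb' : b ∉ W.filter fun t' => s b < s t' := fun hb' => lt_irrefl _ (mem_filter.mp hb').2
  simpa [scoreRank, card_insert_of_notMem hb'] using card_le_card hsub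

lemma card_filter_insert_erase (P : α → Prop) [DecidablePred P] {W : Finset α} {a b : α}
    (hb : b ∈ W) (ha : a ∉ W) :
    #((insert a (W.erase b)).filter P) + (if P b then 1 else 0) =
      #(W.filter P) + (if P a then 1 else 0) := by
  have ha' : a ∉ W.erase b := fun h => ha (mem_of_mem_erase h)
  rw [card_filter, card_filter, sum_insert ha', ← add_sum_erase W _ hb]
  ring

lemma scoreRank_insert_erase {W : Finset α} {a b : α} (hb : b ∈ W) (ha : a ∉ W) (t : α) :
    scoreRank s (insert a (W.erase b)) t + (if s t < s b then 1 else 0) =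
      scoreRank s W t + (if s t < s a then 1 else 0) :=
  card_filter_insert_erase _ hb ha

/-- Replacing `b` by a higher-scored `a` only pushes down the elements scored strictly between
them, and those were ranked strictly above `b`, so they stay in the top `k`. -/
lemma topK_insert_erase {k : ℕ} {W : Finset α} {a b : α} (hs : Set.InjOn s W)
    (hab : s b < s a) (hb : b ∈ topK s k W) (ha : a ∉ W) :
    topK s k (insert a (W.erase b)) = insert a ((topK s k W).erase b) := by
  obtain ⟨hbW, hbk⟩ := mem_topK.mp hb
  have hne : a ≠ b := fun h => ha (h ▸ hbW)
  have hrank := scoreRank_insert_erase (s := s) hbW ha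
  ext t
  simp only [mem_topK, mem_insert, mem_erase]
  by_cases hta : t = a
  · subst hta
    have hrk := hrank t
    simp only [lt_irrefl, if_false, if_neg (not_lt_of_gt hab)] at hrk
    have := scoreRank_le_of_le (W := W) hab.le
    exact iff_of_true ⟨Or.inl rfl, by omega⟩ (Or.inl rfl)
  by_cases htb : t = b
  · subst htb
    simp [hne.symm]
  simp only [hta, htb, false_or, true_and, ne_eq, not_false_eq_true]
  refine and_congr_right fun htW => ?_
  have ht := hrank t
  by_cases h1 : s t < s a
  · by_cases h2 : s t < s b
    · simp only [if_pos h1, if_pos h2] at ht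
      omega
    · have hbt : s b < s t := lt_of_le_of_ne (not_lt.mp h2) fun h => htb (hs htW hbW h.symm)
      have := scoreRank_lt_of_lt htW hbt
      simp only [if_pos h1, if_neg h2] at ht
      omega
  · simp only [if_neg h1, if_neg fun h2 : s t < s b => h1 (h2.trans hab)] at ht
    omega

end Ranking

section WorldProb

variable [DecidableEq α] (R : Finset α) (p : α → ℝ)

def worldProb (W : Finset α) : ℝ := (∏ t ∈ W, p t) * ∏ t ∈ R \ W, (1 - p t)

variable {R p}

lemma worldProb_nonneg (hp : ∀ t ∈ R, p t ∈ Set.Icc (0 : ℝ) 1) {W : Finset α} (hW : W ⊆ R) :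
    0 ≤ worldProb R p W :=
  mul_nonneg (prod_nonneg fun t ht => (hp t (hW ht)).1)
    (prod_nonneg fun t ht => sub_nonneg.mpr (hp t (mem_sdiff.mp ht).1).2)

lemma worldProb_self_pos (hp : ∀ t ∈ R, 0 < p t) : 0 < worldProb R p R := by
  rw [worldProb, sdiff_self, bot_eq_empty, prod_empty, mul_one]
  exact prod_pos hp

lemma worldProb_insert_mul {V : Finset α} {a : α} (ha : a ∈ R) (haV : a ∉ V) :
    worldProb R p (insert a V) * (1 - p a) = worldProb R p V * p a := by
  rw [worldProb, worldProb, prod_insert haV, sdiff_insert,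
    ← mul_prod_erase (R \ V) (fun t => 1 - p t) (mem_sdiff.mpr ⟨ha, haV⟩)]
  ring

lemma worldProb_insert_erase_mul {W : Finset α} {a b : α} (hW : W ⊆ R) (ha : a ∈ R)
    (haW : a ∉ W) (hbW : b ∈ W) :
    worldProb R p (insert a (W.erase b)) * ((1 - p a) * p b) =
      worldProb R p W * (p a * (1 - p b)) := by
  have haV : a ∉ W.erase b := fun h => haW (mem_of_mem_erase h)
  have hinsert := worldProb_insert_mul (p := p) (hW hbW) (notMem_erase b W)
  rw [insert_erase hbW] at hinsert
  have hswap := worldProb_insert_mul (p := p) ha haV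
  linear_combination p b * hswap - p a * hinsert

end WorldProb

lemma injOn_insert_erase [DecidableEq α] (a b : α) :
    Set.InjOn (fun W : Finset α => insert a (W.erase b)) {W | b ∈ W ∧ a ∉ W} := by
  rintro W₁ ⟨hb₁, ha₁⟩ W₂ ⟨hb₂, ha₂⟩ h
  have h' := congrArg (fun X => insert b (X.erase a)) h
  simp only [erase_insert (fun h => ha₁ (mem_of_mem_erase h)),
    erase_insert (fun h => ha₂ (mem_of_mem_erase h)), insert_erase hb₁, insert_erase hb₂] at h'
  exact h'

section UTopkProb

variable [DecidableEq α] [LinearOrder β]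

def uTopkProb (R : Finset α) (p : α → ℝ) (s : α → β) (k : ℕ) (S : Finset α) : ℝ :=
  ∑ W ∈ R.powerset.filter (fun W => topK s k W = S), worldProb R p W

variable {R : Finset α} {p : α → ℝ} {s : α → β} {k : ℕ}

lemma worldProb_le_uTopkProb (hp : ∀ t ∈ R, p t ∈ Set.Icc (0 : ℝ) 1) {W : Finset α}
    (hW : W ⊆ R) : worldProb R p W ≤ uTopkProb R p s k (topK s k W) :=
  single_le_sum (f := worldProb R p)
    (fun _ hV => worldProb_nonneg hp (mem_powerset.mp (mem_filter.mp hV).1))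
    (mem_filter.mpr ⟨mem_powerset.mpr hW, rfl⟩)

lemma uTopkProb_mul_le (hp : ∀ t ∈ R, p t ∈ Set.Icc (0 : ℝ) 1) (hs : Set.InjOn s R)
    {a b : α} (ha : a ∈ R) (hb : b ∈ R) (hab : s b < s a) {S : Finset α} (hbS : b ∈ S)
    (haS : a ∉ S) :
    uTopkProb R p s k S * (p a * (1 - p b)) ≤
      uTopkProb R p s k (insert a (S.erase b)) * ((1 - p a) * p b) := by
  set swap : Finset α → Finset α := fun W => insert a (W.erase b)
  set worlds := R.powerset.filter (fun W => topK s k W = S)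
  have hworld : ∀ W ∈ worlds, W ⊆ R ∧ topK s k W = S := fun W hW => by
    simpa only [worlds, mem_filter, mem_powerset] using hW
  have hswappable : ∀ W ∈ worlds, b ∈ W ∧ a ∉ W := fun W hW => by
    obtain ⟨-, rfl⟩ := hworld W hW
    exact ⟨(mem_topK.mp hbS).1, fun haW => haS (mem_topK_of_le hbS haW hab.le)⟩
  have hmaps : ∀ W ∈ worlds,
      swap W ∈ R.powerset.filter (fun W => topK s k W = insert a (S.erase b)) := by
    intro W hW
    obtain ⟨hWR, hWS⟩ := hworld W hW
    rw [mem_filter, mem_powerset, ← hWS]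
    refine ⟨insert_subset ha ((erase_subset b W).trans hWR), ?_⟩
    rw [← hWS] at hbS
    exact topK_insert_erase (hs.mono (coe_subset.mpr hWR)) hab hbS (hswappable W hW).2
  have hd : 0 ≤ (1 - p a) * p b := mul_nonneg (sub_nonneg.mpr (hp a ha).2) (hp b hb).1
  calc uTopkProb R p s k S * (p a * (1 - p b))
      = ∑ W ∈ worlds, worldProb R p (swap W) * ((1 - p a) * p b) := by
        rw [uTopkProb, sum_mul]
        refine sum_congr rfl fun W hW => ?_
        exact (worldProb_insert_erase_mul (hworld W hW).1 ha (hswappable W hW).2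
          (hswappable W hW).1).symm
    _ = ∑ W ∈ worlds.image swap, worldProb R p W * ((1 - p a) * p b) :=
        (sum_image (f := fun W => worldProb R p W * ((1 - p a) * p b)) (g := swap)
          fun W₁ h₁ W₂ h₂ => injOn_insert_erase a b (hswappable W₁ h₁) (hswappable W₂ h₂)).symm
    _ ≤ uTopkProb R p s k (insert a (S.erase b)) * ((1 - p a) * p b) := by
        rw [uTopkProb, sum_mul]
        refine sum_le_sum_of_subset_of_nonneg (image_subset_iff.mpr hmaps) fun W hW _ => ?_
        exact mul_nonneg (worldProb_nonneg hp (mem_powerset.mp (mem_filter.mp hW).1)) hd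

end UTopkProb

end UTopk

open UTopk in
theorem uTopk_faithfulness_general {α : Type*} [DecidableEq α]
    (R : Finset α) (p s : α → ℝ)
    (hp : ∀ t ∈ R, p t ∈ Set.Ioo (0 : ℝ) 1)
    (hs : Set.InjOn s R)
    (k : ℕ) (ti tj : α) (hti : ti ∈ R)
    (hscore : s tj < s ti) (hprob : p tj < p ti)
    (Q : Finset α → ℝ)
    (hQ : ∀ S, Q S =
      ∑ W ∈ R.powerset.filter (fun W =>
          W.filter (fun t => (W.filter (fun t' => s t < s t')).card < k) = S),
        (∏ t ∈ W, p t) * ∏ t ∈ R \ W, (1 - p t)) :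
    (∀ S ⊆ R, tj ∈ S → ti ∉ S →
      Q S * (p ti * (1 - p tj)) / ((1 - p ti) * p tj) ≤ Q (insert ti (S.erase tj))) ∧
    (∀ S ⊆ R, (∀ T ⊆ R, Q T ≤ Q S) → tj ∈ S → ti ∈ S) := by
  obtain rfl : Q = uTopkProb R p s k := funext hQ
  have hpIcc t (ht : t ∈ R) : p t ∈ Set.Icc (0 : ℝ) 1 := Set.Ioo_subset_Icc_self (hp t ht)
  have hdenom S (hSR : S ⊆ R) (hjS : tj ∈ S) : 0 < (1 - p ti) * p tj :=
    mul_pos (sub_pos.mpr (hp ti hti).2) (hp tj (hSR hjS)).1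
  have key S (hSR : S ⊆ R) (hjS : tj ∈ S) (hiS : ti ∉ S) :=
    uTopkProb_mul_le (k := k) hpIcc hs hti (hSR hjS) hscore hjS hiS
  refine ⟨fun S hSR hjS hiS => (div_le_iff₀ (hdenom S hSR hjS)).mpr (key S hSR hjS hiS), ?_⟩
  intro S hSR hmax hjS
  by_contra hiS
  have hgain : (1 - p ti) * p tj < p ti * (1 - p tj) := by linarith
  have hpos : 0 < uTopkProb R p s k S :=
    calc 0 < worldProb R p R := worldProb_self_pos fun t ht => (hp t ht).1
      _ ≤ uTopkProb R p s k (topK s k R) := worldProb_le_uTopkProb hpIcc subset_rfl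
      _ ≤ uTopkProb R p s k S := hmax _ (filter_subset _ _)
  refine lt_irrefl (uTopkProb R p s k S * ((1 - p ti) * p tj)) ?_
  calc uTopkProb R p s k S * ((1 - p ti) * p tj)
      < uTopkProb R p s k S * (p ti * (1 - p tj)) := mul_lt_mul_of_pos_left hgain hpos
    _ ≤ uTopkProb R p s k (insert ti (S.erase tj)) * ((1 - p ti) * p tj) := key S hSR hjS hiS
    _ ≤ uTopkProb R p s k S * ((1 - p ti) * p tj) :=
        mul_le_mul_of_nonneg_right (hmax _ (insert_subset hti ((erase_subset tj S).trans hSR)))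
          (hdenom S hSR hjS).le

/-- Faithfulness of U-Topk in a simple probabilistic relation. Key step: for a
candidate answer set `S` containing `tj` but not `ti` (where `ti` has higher
score and higher probability), the set `S' = (S \ {tj}) ∪ {ti}` satisfies
`Q_k(S') ≥ Q_k(S) · p(ti)(1-p(tj)) / ((1-p(ti))p(tj))`; consequently any set
maximizing `Q_k` that contains `tj` must contain `ti`. -/
theorem uTopk_faithfulness {α : Type*} [DecidableEq α]
    (R : Finset α) (p s : α → ℝ)
    (hp : ∀ t ∈ R, p t ∈ Set.Ioo (0 : ℝ) 1)
    (hs : Set.InjOn s R)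
    (k : ℕ) (ti tj : α) (hti : ti ∈ R) (htj : tj ∈ R)
    (hscore : s tj < s ti) (hprob : p tj < p ti)
    (Q : Finset α → ℝ)
    (hQ : ∀ S, Q S =
      ∑ W ∈ R.powerset.filter (fun W =>
          W.filter (fun t => (W.filter (fun t' => s t < s t')).card < k) = S),
        (∏ t ∈ W, p t) * ∏ t ∈ R \ W, (1 - p t)) :
    (∀ S ⊆ R, tj ∈ S → ti ∉ S →
      Q S * (p ti * (1 - p tj)) / ((1 - p ti) * p tj) ≤ Q (insert ti (S.erase tj))) ∧
    (∀ S ⊆ R, (∀ T ⊆ R, Q T ≤ Q S) → tj ∈ S → ti ∈ S) :=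
  uTopk_faithfulness_general R p s hp hs k ti tj hti hscore hprob Q hQ
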